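/- arXiv:1604.04740 — 7 statements merged into one kernel-verified Lean document; each statement's English description precedes it below -/
import Mathlib

section
/- For M=3 entangled streams with outputs d0, d1, d2 satisfying |d_m| ≤ 2^(l+k-1) - 2^l and entangled outputs δ0 = 2^l·d2 + d0, δ1 = 2^l·d0 + d1, δ2 = 2^l·d1 + d2: the values d0, d1, d2 are recoverable from any two of the three entangled outputs δ0, δ1, δ2. -/
lemma chain_rec (l k : ℕ) (hk : 1 ≤ k) (hkl : k ≤ l) (a b c a' b' c' : ℤ)
    (hc : |c| ≤ 2^(l+k-1) - 2^l) (hc' : |c'| ≤ 2^(l+k-1) - 2^l)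
    (e1 : 2^l * a + b = 2^l * a' + b') (e2 : 2^l * b + c = 2^l * b' + c') :
    a = a' ∧ b = b' ∧ c = c' := by
  have ht : c - c' = 2^l * 2^l * (a - a') := by linear_combination e2 - 2^l * e1
  have hpos : (0:ℤ) < 2^l := by positivity
  have h2l : (2:ℤ)^(l+k-1) * 2 = 2^(l+k) := by rw [← pow_succ]; congr 1; omega
  have hpow : (2:ℤ)^(l+k) ≤ 2^l * 2^l := by
    rw [← pow_add]; exact pow_le_pow_right₀ (by norm_num) (by omega)
  have haa : a = a' := by
    by_contra hne
    have h1 : (1:ℤ) ≤ |a - a'| := Int.one_le_abs (sub_ne_zero.mpr hne)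
    have habs : |c - c'| = 2^l * 2^l * |a - a'| := by
      rw [ht, abs_mul, abs_of_pos (by positivity : (0:ℤ) < 2^l*2^l)]
    have hub : |c - c'| ≤ |c| + |c'| := abs_sub _ _
    nlinarith
  have hbb : b = b' := by
    subst haa
    linarith
  subst haa hbb
  exact ⟨rfl, rfl, by linarith⟩

/-- Proposition 1 (M = 3): the outputs d0, d1, d2, bounded by
    |d_m| ≤ 2^(l+k-1) - 2^l, are recoverable from any two of the three
    entangled outputs δ0 = 2^l·d2 + d0, δ1 = 2^l·d0 + d1, δ2 = 2^l·d1 + d2: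
    any two bounded triples whose entangled outputs agree on two coordinates
    are identical. -/
theorem recovery_from_any_two_M3 (l k : ℕ) (hk : 1 ≤ k) (hkl : k ≤ l)
    (d0 d1 d2 d0' d1' d2' : ℤ)
    (h0 : |d0| ≤ 2^(l+k-1) - 2^l) (h1 : |d1| ≤ 2^(l+k-1) - 2^l)
    (h2 : |d2| ≤ 2^(l+k-1) - 2^l)
    (h0' : |d0'| ≤ 2^(l+k-1) - 2^l) (h1' : |d1'| ≤ 2^(l+k-1) - 2^l)
    (h2' : |d2'| ≤ 2^(l+k-1) - 2^l) :
    -- from δ1 and δ2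
    ((2^l * d0 + d1 = 2^l * d0' + d1' ∧ 2^l * d1 + d2 = 2^l * d1' + d2') →
      d0 = d0' ∧ d1 = d1' ∧ d2 = d2') ∧
    -- from δ0 and δ2
    ((2^l * d2 + d0 = 2^l * d2' + d0' ∧ 2^l * d1 + d2 = 2^l * d1' + d2') →
      d0 = d0' ∧ d1 = d1' ∧ d2 = d2') ∧
    -- from δ0 and δ1
    ((2^l * d2 + d0 = 2^l * d2' + d0' ∧ 2^l * d0 + d1 = 2^l * d0' + d1') →
      d0 = d0' ∧ d1 = d1' ∧ d2 = d2') := by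
  refine ⟨fun ⟨e1, e2⟩ => ?_, fun ⟨e1, e2⟩ => ?_, fun ⟨e1, e2⟩ => ?_⟩
  · exact chain_rec l k hk hkl d0 d1 d2 d0' d1' d2' h2 h2' e1 e2
  · obtain ⟨x, y, z⟩ := chain_rec l k hk hkl d1 d2 d0 d1' d2' d0' h0 h0' e2 e1
    exact ⟨z, x, y⟩
  · obtain ⟨x, y, z⟩ := chain_rec l k hk hkl d2 d0 d1 d2' d0' d1' h1 h1' e1 e2
    exact ⟨y, z, x⟩
end

section
/- For any M ≥ 3, the entanglement map on ℤ^M defined by (ε_0, ..., ε_{M-1}) where ε_0 = c_0 + 2^l·c_{M-1} and ε_m = 2^l·c_{m-1} + c_m for 1 ≤ m ≤ M-1, is injective. -/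
/-- Generalized entanglement: for M ≥ 3 and l ≥ 1, the map on ℤ^M
    (c_0, ..., c_{M-1}) ↦ (ε_0, ..., ε_{M-1}),
    ε_m = 2^l·c_{(m-1) mod M} + c_m, is injective. -/
theorem entanglement_general_injective (M l : ℕ) (hM : 3 ≤ M) (hl : 1 ≤ l) :
    Function.Injective (fun c : Fin M → ℤ => fun m : Fin M =>
      (2 : ℤ)^l * c ⟨(m.val + M - 1) % M, Nat.mod_lt _ (by omega)⟩ + c m) := by
  intro a b h
  set d : Fin M → ℤ := fun m => a m - b m with hd
  have h' : ∀ m : Fin M,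
      d m = -((2:ℤ)^l) * d ⟨(m.val + M - 1) % M, Nat.mod_lt _ (by omega)⟩ := by
    intro m
    have := congrFun h m
    simp only at this
    simp only [hd]
    linarith
  -- step relation
  have step : ∀ k : ℕ, ∀ hk : k + 1 < M,
      d ⟨k + 1, hk⟩ = -((2:ℤ)^l) * d ⟨k, by omega⟩ := by
    intro k hk
    have := h' ⟨k + 1, hk⟩
    have hidx : ((⟨k + 1, hk⟩ : Fin M).val + M - 1) % M = k := by
      show (k + 1 + M - 1) % M = k
      have e1 : k + 1 + M - 1 = k + M := by omega
      rw [e1, Nat.add_mod_right, Nat.mod_eq_of_lt (by omega)]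
    convert this using 3
    exact (Fin.ext hidx.symm)
  have h0 : (0 : ℕ) < M := by omega
  -- d k = (-2^l)^k * d 0
  have geom : ∀ k : ℕ, ∀ hk : k < M,
      d ⟨k, hk⟩ = (-((2:ℤ)^l))^k * d ⟨0, h0⟩ := by
    intro k
    induction k with
    | zero => intro hk; simp
    | succ n ih =>
      intro hk
      rw [step n hk, ih (by omega), pow_succ]
      ring
  -- relation at m = 0 : d 0 = -2^l * d (M-1)
  have hlast : d ⟨0, h0⟩ = -((2:ℤ)^l) * d ⟨M - 1, by omega⟩ := by
    have := h' ⟨0, h0⟩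
    have hidx : ((⟨0, h0⟩ : Fin M).val + M - 1) % M = M - 1 := by
      show (0 + M - 1) % M = M - 1
      rw [Nat.mod_eq_of_lt (by omega)]
      omega
    convert this using 3
    exact (Fin.ext hidx.symm)
  have key : d ⟨0, h0⟩ = (-((2:ℤ)^l))^M * d ⟨0, h0⟩ := by
    have hM1 : M - 1 + 1 = M := by omega
    conv_lhs => rw [hlast, geom (M - 1) (by omega)]
    rw [← mul_assoc, ← pow_succ', hM1]
  have h2 : (2:ℤ) ≤ (2:ℤ)^l := by
    calc (2:ℤ) = 2^1 := by norm_num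
    _ ≤ 2^l := pow_le_pow_right₀ (by norm_num) hl
  have habs : |(-((2:ℤ)^l))^M| = ((2:ℤ)^l)^M := by
    rw [abs_pow, abs_neg, abs_of_nonneg (by positivity)]
  have hge : (2:ℤ) ≤ ((2:ℤ)^l)^M := by
    calc (2:ℤ) ≤ (2:ℤ)^l := h2
    _ = ((2:ℤ)^l)^1 := by ring
    _ ≤ ((2:ℤ)^l)^M := pow_le_pow_right₀ (by linarith) (by omega)
  have hne : (-((2:ℤ)^l))^M ≠ 1 := by
    intro hcontra
    rw [hcontra] at habs
    simp at habs
    omega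
  have hd0 : d ⟨0, h0⟩ = 0 := by
    have : ((-((2:ℤ)^l))^M - 1) * d ⟨0, h0⟩ = 0 := by linarith [key]
    rcases mul_eq_zero.mp this with h1 | h1
    · exact absurd (by linarith : (-((2:ℤ)^l))^M = 1) hne
    · exact h1
  funext m
  have : d m = 0 := by
    have := geom m.val m.isLt
    rw [hd0, mul_zero] at this
    simpa [Fin.eta] using this
  have : a m - b m = 0 := this
  linarith
end

section
/- For M ≥ 3, if the true outputs satisfy |d_m| ≤ 2^{(M-3)l+k}·(2^{l-1} - 1) for all m (with 1 ≤ k ≤ l), then for any excluded index r, all M outputs d_0, ..., d_{M-1} can be recovered exactly from the M-1 entangled outputs {δ_m : m ≠ r}, where δ_m = 2^l·d_{(m-1) mod M} + d_m. -/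
/-- Proposition 3 (general M fail-stop recovery): if all outputs satisfy
    |d_m| ≤ 2^{(M-3)l+k}·(2^{l-1}-1) with 1 ≤ k ≤ l, then for any excluded
    index r, the M outputs are determined exactly by the M-1 entangled
    outputs δ_m = 2^l·d_{(m-1) mod M} + d_m with m ≠ r: any two bounded
    output tuples agreeing on those M-1 entangled values are identical. -/
theorem failstop_recovery_general (M l k : ℕ) (hM : 3 ≤ M) (hk : 1 ≤ k) (hkl : k ≤ l)
    (r : ℕ) (hr : r < M)
    (d d' : ℕ → ℤ)
    (hd : ∀ m < M, |d m| ≤ 2^((M - 3) * l + k) * (2^(l - 1) - 1))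
    (hd' : ∀ m < M, |d' m| ≤ 2^((M - 3) * l + k) * (2^(l - 1) - 1))
    (hagree : ∀ m < M, m ≠ r →
      2^l * d ((m + M - 1) % M) + d m = 2^l * d' ((m + M - 1) % M) + d' m) :
    ∀ m < M, d m = d' m := by
  have hM0 : 0 < M := by omega
  set e : ℕ → ℤ := fun m => d m - d' m with he
  set B : ℤ := 2^((M - 3) * l + k) * (2^(l - 1) - 1) with hB
  have hbound : ∀ m < M, |e m| ≤ 2 * B := by
    intro m hm
    have h1 : |d m - d' m| ≤ |d m| + |d' m| := by
      simpa [sub_eq_add_neg] using abs_add_le (d m) (-(d' m))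
    have h2 : |d m| + |d' m| ≤ B + B := add_le_add (hd m hm) (hd' m hm)
    simp only [he]
    linarith
  have key : ∀ j < M, e ((r + j) % M) = (-2^l : ℤ)^j * e r := by
    intro j
    induction j with
    | zero => intro _; simp [Nat.mod_eq_of_lt hr]
    | succ j ih =>
      intro hj
      have ihj := ih (by omega)
      set m := (r + (j+1)) % M with hm
      have hmM : m < M := Nat.mod_lt _ hM0
      have hne : m ≠ r := by
        intro h
        have h2 : (r + (j+1)) % M = (r + 0) % M := by
          simpa [Nat.mod_eq_of_lt hr] using h
        have h3 : (j+1) % M = 0 % M := Nat.ModEq.add_left_cancel' r h2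
        rw [Nat.zero_mod, Nat.mod_eq_of_lt hj] at h3
        exact Nat.succ_ne_zero j h3
      have hprev : (m + M - 1) % M = (r + j) % M := by
        have h1 : m + M - 1 = m + (M - 1) := by omega
        rw [h1, hm, Nat.mod_add_mod]
        have h2 : r + (j+1) + (M - 1) = (r + j) + M := by omega
        rw [h2, Nat.add_mod_right]
      have hag := hagree m hmM hne
      rw [hprev] at hag
      have hstep : e m = (-2^l) * e ((r + j) % M) := by
        simp only [he]
        linarith
      rw [hstep, ihj, pow_succ]
      ring
  have her : e r = 0 := by
    by_contra h
    have h1 : (1 : ℤ) ≤ |e r| := by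
      have := abs_pos.mpr h
      omega
    have h2 := key (M-1) (by omega)
    have h3 : |e ((r + (M-1)) % M)| = (2^l : ℤ)^(M-1) * |e r| := by
      rw [h2, abs_mul, abs_pow, abs_neg, abs_pow]
      simp
    have h4 := hbound ((r + (M-1)) % M) (Nat.mod_lt _ hM0)
    rw [h3] at h4
    have h5 : (2^l : ℤ)^(M-1) ≤ (2^l : ℤ)^(M-1) * |e r| :=
      le_mul_of_one_le_right (by positivity) h1
    have h6 : 2 * B < (2^l : ℤ)^(M-1) := by
      have hl : 1 ≤ l := le_trans hk hkl
      have hp2 : (2:ℤ)^l = 2 * 2^(l-1) := by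
        conv_lhs => rw [show l = (l-1)+1 by omega]
        rw [pow_succ]
        ring
      have e1 : 2 * B = 2^((M-3)*l + k) * ((2:ℤ)^l - 2) := by
        rw [hB, hp2]
        ring
      have e2 : (2:ℤ)^l - 2 < 2^l := by omega
      have e3 : 2^((M-3)*l + k) * ((2:ℤ)^l - 2) < 2^((M-3)*l + k) * 2^l :=
        mul_lt_mul_of_pos_left e2 (by positivity)
      have e4 : (2:ℤ)^((M-3)*l + k) * 2^l = 2^((M-3)*l + k + l) := by
        rw [← pow_add]
      have e5 : (2:ℤ)^((M-3)*l + k + l) ≤ 2^((M-1)*l) := by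
        apply pow_le_pow_right₀ (by norm_num)
        have h7 : (M-1)*l = (M-3)*l + 2*l := by
          rw [show M - 1 = (M-3) + 2 by omega]
          ring
        omega
      have e6 : ((2:ℤ)^l)^(M-1) = 2^((M-1)*l) := by
        rw [← pow_mul, Nat.mul_comm]
      rw [e1, e6]
      calc 2^((M-3)*l + k) * ((2:ℤ)^l - 2) < 2^((M-3)*l+k) * 2^l := e3
        _ = 2^((M-3)*l + k + l) := e4
        _ ≤ 2^((M-1)*l) := e5
    linarith
  intro m hm
  have hex : ∃ j, j < M ∧ (r + j) % M = m := by
    rcases le_or_gt r m with h | h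
    · exact ⟨m - r, by omega, by rw [show r + (m-r) = m by omega, Nat.mod_eq_of_lt hm]⟩
    · exact ⟨m + M - r, by omega, by
        rw [show r + (m + M - r) = m + M by omega, Nat.add_mod_right, Nat.mod_eq_of_lt hm]⟩
  obtain ⟨j, hj, hjm⟩ := hex
  have hz := key j hj
  rw [hjm, her, mul_zero] at hz
  have : d m - d' m = 0 := hz
  linarith
end

section
/- If |a| ≤ 2^{l+k-1} - 2^l and |b| ≤ 2^{l+k-1} - 2^l with 1 ≤ k ≤ l and 2l + k ≤ w, then the entangled value 2^l·a + b satisfies |2^l·a + b| < 2^{w-1}; that is, the entangled representation never overflows a w-bit signed integer. -/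
/-- Overflow-freedom of the M = 3 entanglement: if |a|, |b| ≤ 2^{l+k-1} - 2^l
    with 1 ≤ k ≤ l and 2l + k ≤ w, then |2^l·a + b| < 2^{w-1}. -/
theorem entangled_value_no_overflow_M3 (l k w : ℕ) (hk : 1 ≤ k) (hkl : k ≤ l)
    (hw : 2 * l + k ≤ w)
    (a b : ℤ)
    (ha : |a| ≤ 2^(l+k-1) - 2^l) (hb : |b| ≤ 2^(l+k-1) - 2^l) :
    |2^l * a + b| < 2^(w-1) := by
  obtain ⟨m, rfl⟩ : ∃ m, k = m + 1 := ⟨k - 1, (Nat.succ_pred_eq_of_pos hk).symm⟩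
  have hlk : l + (m + 1) - 1 = l + m := by omega
  rw [hlk] at ha hb
  have hml : m + 1 ≤ l := hkl
  have hw1 : 2 * l + m + 1 ≤ w := by omega
  have h1 : (2:ℤ)^(l+m) ≤ 2^(2*l) := by
    apply pow_le_pow_right₀ (by norm_num); omega
  have h2 : (2:ℤ)^(2*l+m) ≤ 2^(w-1) := by
    apply pow_le_pow_right₀ (by norm_num); omega
  have hp : (0:ℤ) < 2^l := by positivity
  calc |2^l * a + b| ≤ |2^l * a| + |b| := abs_add_le _ _
    _ = 2^l * |a| + |b| := by rw [abs_mul, abs_pow]; norm_num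
    _ ≤ 2^l * (2^(l+m) - 2^l) + (2^(l+m) - 2^l) := by
        gcongr
    _ = 2^(2*l+m) - 2^(2*l) + (2^(l+m) - 2^l) := by
        rw [mul_sub, ← pow_add, ← pow_add]; ring_nf
    _ < 2^(2*l+m) := by nlinarith [h1, hp]
    _ ≤ 2^(w-1) := h2
end

section
/- For M ≥ 3, if |a|, |b| ≤ 2^{(M-3)l+k}·(2^{l-1}-1) with 1 ≤ k ≤ l and (M-1)l + k ≤ w, then |2^l·a + b| < 2^{w-1}, so the generalized entangled value fits within a w-bit signed integer. -/
/-- Overflow-freedom of generalized entanglement: for M ≥ 3, if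
    |a|, |b| ≤ 2^{(M-3)l+k}·(2^{l-1}-1) with 1 ≤ k ≤ l and (M-1)l + k ≤ w,
    then |2^l·a + b| < 2^{w-1}. -/
theorem entangled_value_no_overflow_general (M l k w : ℕ) (hM : 3 ≤ M)
    (hk : 1 ≤ k) (hkl : k ≤ l) (hw : (M - 1) * l + k ≤ w)
    (a b : ℤ)
    (ha : |a| ≤ 2^((M - 3) * l + k) * (2^(l - 1) - 1))
    (hb : |b| ≤ 2^((M - 3) * l + k) * (2^(l - 1) - 1)) :
    |2^l * a + b| < 2^(w-1) := by
  obtain ⟨m, rfl⟩ : ∃ m, M = m + 3 := ⟨M - 3, by omega⟩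
  have hl : 1 ≤ l := hk.trans hkl
  set E := (m + 3 - 3) * l + k with hE
  have hexp : E + ((l - 1) + l) ≤ w - 1 := by
    have h2 : (m + 3 - 1) * l = m * l + 2 * l := by
      have : m + 3 - 1 = m + 2 := by omega
      rw [this]; ring
    simp only [hE, Nat.add_sub_cancel]
    omega
  have hx : (1:ℤ) ≤ 2 ^ (l - 1) := by exact_mod_cast Nat.one_le_two_pow
  have hxl : (2:ℤ) ^ (l - 1) ≤ 2 ^ l := pow_le_pow_right₀ (by norm_num) (by omega)
  have hEpos : (0:ℤ) < 2 ^ E := by positivity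
  have hstep : (2:ℤ)^l * (2^E * (2^(l-1) - 1)) + 2^E * (2^(l-1) - 1) < 2^(E + ((l-1) + l)) := by
    have : (2:ℤ)^(E + ((l-1) + l)) = 2^E * (2^(l-1) * 2^l) := by
      rw [pow_add, pow_add, pow_add]
    rw [this]
    nlinarith [hEpos, hx, hxl, pow_pos (show (0:ℤ) < 2 by norm_num) l]
  calc |2^l * a + b| ≤ |2^l * a| + |b| := abs_add_le _ _
    _ = 2^l * |a| + |b| := by rw [abs_mul, abs_pow]; norm_num
    _ ≤ 2^l * (2^E * (2^(l-1) - 1)) + 2^E * (2^(l-1) - 1) := by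
        have := mul_le_mul_of_nonneg_left ha (show (0:ℤ) ≤ 2^l by positivity)
        linarith
    _ < 2^(E + ((l-1) + l)) := hstep
    _ ≤ 2^(w-1) := pow_le_pow_right₀ (by norm_num) hexp
end

section
/- For M=3 with bound B = 2^{l+k-1} - 2^l and 1 ≤ k ≤ l: the map Φ : [-B,B]³ ∩ ℤ³ → ℤ² given by Φ(d_0,d_1,d_2) = (2^l·d_0 + d_1, 2^l·d_1 + d_2) is injective. -/
/-- M = 3, B = 2^{l+k-1} - 2^l with 1 ≤ k ≤ l: the map
    Φ(d0, d1, d2) = (2^l·d0 + d1, 2^l·d1 + d2) is injective on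
    [-B, B]³ ∩ ℤ³. -/
theorem two_entangled_outputs_injective_M3 (l k : ℕ) (hk : 1 ≤ k) (hkl : k ≤ l) :
    Set.InjOn
      (fun p : ℤ × ℤ × ℤ =>
        ((2 : ℤ)^l * p.1 + p.2.1, (2 : ℤ)^l * p.2.1 + p.2.2))
      {p : ℤ × ℤ × ℤ | |p.1| ≤ 2^(l+k-1) - 2^l ∧ |p.2.1| ≤ 2^(l+k-1) - 2^l ∧
        |p.2.2| ≤ 2^(l+k-1) - 2^l} := by
  rintro ⟨a, b, c⟩ ⟨h1, h2, h3⟩ ⟨a', b', c'⟩ ⟨h1', h2', h3'⟩ heq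
  simp only [Prod.mk.injEq] at heq
  obtain ⟨e1, e2⟩ := heq
  -- e1 : 2^l * a + b = 2^l * a' + b'
  -- e2 : 2^l * b + c = 2^l * b' + c'
  have hbb : b - b' = 2^l * (a' - a) := by ring_nf; linarith
  have hcc : c - c' = 2^l * (b' - b) := by ring_nf; linarith
  have hcc2 : c - c' = 2^l * 2^l * (a - a') := by
    rw [hcc]; rw [show b' - b = -(b - b') by ring, hbb]; ring
  have hpow : (2:ℤ)^(l+k-1) * 2 = 2^(l+k) := by
    rw [← pow_succ]; congr 1; omega
  have hpow2 : (2:ℤ)^(l+k) ≤ 2^l * 2^l := by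
    rw [← pow_add]; exact pow_le_pow_right₀ (by norm_num) (by omega)
  have hl1 : (1:ℤ) ≤ 2^l := one_le_pow₀ (by norm_num)
  have haa : a = a' := by
    by_contra hne
    have h1le : (1:ℤ) ≤ |a - a'| := by
      rcases abs_pos.mpr (sub_ne_zero.mpr hne) with h
      omega
    have hbig : 2^l * 2^l ≤ |c - c'| := by
      rw [hcc2, abs_mul, abs_of_nonneg (by positivity : (0:ℤ) ≤ 2^l * 2^l)]
      nlinarith [mul_pos (pow_pos (by norm_num : (0:ℤ) < 2) l) (pow_pos (by norm_num : (0:ℤ) < 2) l)]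
    have hsmall : |c - c'| ≤ 2^(l+k) - 2 * 2^l := by
      calc |c - c'| ≤ |c| + |c'| := abs_sub c c'
        _ ≤ 2^(l+k) - 2 * 2^l := by linarith [hpow]
    linarith
  have hbb' : b = b' := by rw [haa] at hbb; simp at hbb; linarith
  have hcc' : c = c' := by rw [hbb'] at hcc; simp at hcc; linarith
  simp [haa, hbb', hcc']
end

section
/- For any M ≥ 3 and bound B = 2^{(M-3)l+k}·(2^{l-1}-1) with 1 ≤ k ≤ l: the map from ([-B,B] ∩ ℤ)^M to ℤ^{M-1} sending (d_0, ..., d_{M-1}) to the M-1 entangled values (δ_m)_{m ≠ r}, where δ_m = 2^l·d_{(m-1) mod M} + d_m, is injective for every choice of excluded index r. -/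
/-- General single-erasure recoverability: for M ≥ 3 and
    B = 2^{(M-3)l+k}·(2^{l-1}-1) with 1 ≤ k ≤ l, the map sending a bounded
    output tuple (d_0, ..., d_{M-1}) ∈ ([-B,B] ∩ ℤ)^M to the M-1 entangled
    values (δ_m)_{m ≠ r}, δ_m = 2^l·d_{(m-1) mod M} + d_m, is injective,
    for every excluded index r. -/
theorem erasure_injective_general (M l k : ℕ) (hM : 3 ≤ M) (hk : 1 ≤ k) (hkl : k ≤ l)
    (r : Fin M) :
    Set.InjOn
      (fun d : Fin M → ℤ => fun m : {m : Fin M // m ≠ r} =>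
        (2 : ℤ)^l * d ⟨((m : Fin M).val + M - 1) % M, Nat.mod_lt _ (by omega)⟩
          + d (m : Fin M))
      {d : Fin M → ℤ | ∀ m, |d m| ≤ 2^((M - 3) * l + k) * (2^(l - 1) - 1)} := by
  intro d hd e he hde
  simp only [Set.mem_setOf_eq] at hd he
  have hM0 : 0 < M := by omega
  have hl : 1 ≤ l := le_trans hk hkl
  set B : ℤ := 2^((M - 3) * l + k) * (2^(l - 1) - 1) with hB
  have key : ∀ (m : Fin M) (hm : m ≠ r),
      2^l * d ⟨(m.val + M - 1) % M, Nat.mod_lt _ hM0⟩ + d m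
        = 2^l * e ⟨(m.val + M - 1) % M, Nat.mod_lt _ hM0⟩ + e m := by
    intro m hm
    exact congrFun hde ⟨m, hm⟩
  set idx : ℕ → Fin M := fun j => ⟨(r.val + j) % M, Nat.mod_lt _ hM0⟩ with hidx
  set f : ℕ → ℤ := fun j => d (idx j) - e (idx j) with hf
  have hrel : ∀ j, 1 ≤ j → j ≤ M - 1 → f j = -(2^l) * f (j - 1) := by
    intro j hj1 hj2
    have hne : idx j ≠ r := by
      intro h
      have hv : (r.val + j) % M = r.val := congrArg Fin.val h
      rcases lt_or_ge (r.val + j) M with h' | h'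
      · rw [Nat.mod_eq_of_lt h'] at hv; omega
      · rw [Nat.mod_eq_sub_mod h', Nat.mod_eq_of_lt (by omega)] at hv
        have := r.isLt; omega
    have hprev2 : (((r.val + j) % M) + M - 1) % M = (r.val + (j - 1)) % M := by
      have h1 : ((r.val + j) % M) + M - 1 = ((r.val + j) % M) + (M - 1) := by omega
      rw [h1, Nat.mod_add_mod]
      have h2 : r.val + j + (M - 1) = (r.val + (j - 1)) + M := by omega
      rw [h2, Nat.add_mod_right]
    have hk2 := key (idx j) hne
    have heq : (⟨((idx j).val + M - 1) % M, Nat.mod_lt _ hM0⟩ : Fin M) = idx (j - 1) :=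
      Fin.ext hprev2
    rw [heq] at hk2
    simp only [hf]
    linarith [hk2]
  have hpow : ∀ j, j ≤ M - 1 → f j = (-(2^l : ℤ))^j * f 0 := by
    intro j
    induction j with
    | zero => intro _; simp
    | succ n ih =>
      intro hn
      have h1 : f (n + 1) = -(2^l) * f n := by
        have := hrel (n + 1) (by omega) hn
        simpa using this
      rw [h1, ih (by omega), pow_succ]
      ring
  have hbound : ∀ j, |f j| ≤ 2 * B := by
    intro j
    calc |f j| ≤ |d (idx j)| + |e (idx j)| := abs_sub _ _
      _ ≤ B + B := add_le_add (hd (idx j)) (he (idx j))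
      _ = 2 * B := by ring
  have hlast := hpow (M - 1) le_rfl
  have habs : (2:ℤ)^((M - 1) * l) * |f 0| ≤ 2 * B := by
    have h := hbound (M - 1)
    rw [hlast, abs_mul] at h
    have h2 : |(-((2:ℤ)^l))^(M - 1)| = 2^((M - 1) * l) := by
      rw [abs_pow, abs_neg, abs_pow, abs_two, ← pow_mul, mul_comm l]
    rw [h2] at h
    exact h
  have hBsmall : 2 * B < (2:ℤ)^((M - 1) * l) := by
    have hexp : (M - 3) * l + k + l ≤ (M - 1) * l := by
      have h : (M - 1) * l = (M - 3) * l + 2 * l := by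
        have h' : M - 1 = (M - 3) + 2 := by omega
        rw [h', add_mul]
      omega
    rw [hB]
    have h1 : (2:ℤ) * (2 ^ ((M - 3) * l + k) * (2 ^ (l - 1) - 1))
        = 2 ^ ((M - 3) * l + k) * (2 * 2 ^ (l - 1) - 2) := by ring
    have h2 : (2:ℤ) * 2 ^ (l - 1) = 2 ^ l := by
      rw [← pow_succ']
      congr 1
      omega
    rw [h1, h2]
    have h3 : (2:ℤ) ^ ((M - 3) * l + k) * (2 ^ l - 2) < 2 ^ ((M - 3) * l + k) * 2 ^ l := by
      apply mul_lt_mul_of_pos_left _ (by positivity)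
      linarith
    have h4 : (2:ℤ) ^ ((M - 3) * l + k) * 2 ^ l = 2 ^ ((M - 3) * l + k + l) := by
      rw [← pow_add]
    have h5 : (2:ℤ) ^ ((M - 3) * l + k + l) ≤ 2 ^ ((M - 1) * l) :=
      pow_le_pow_right₀ (by norm_num) hexp
    linarith
  have hf0 : f 0 = 0 := by
    by_contra h
    have h1 : 1 ≤ |f 0| := by
      have := abs_pos.mpr h
      omega
    have h2 : (2:ℤ)^((M - 1) * l) ≤ 2^((M - 1) * l) * |f 0| := by
      nlinarith [pow_pos (show (0:ℤ) < 2 by norm_num) ((M - 1) * l)]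
    linarith
  have hfall : ∀ j, j ≤ M - 1 → f j = 0 := by
    intro j hj
    rw [hpow j hj, hf0, mul_zero]
  funext m
  have hj : (m.val + M - r.val) % M ≤ M - 1 := by
    have := Nat.mod_lt (m.val + M - r.val) hM0
    omega
  have heq : idx ((m.val + M - r.val) % M) = m := by
    apply Fin.ext
    show (r.val + (m.val + M - r.val) % M) % M = m.val
    rw [Nat.add_mod_mod]
    have h1 : r.val + (m.val + M - r.val) = m.val + M := by
      have := r.isLt; omega
    rw [h1, Nat.add_mod_right, Nat.mod_eq_of_lt m.isLt]
  have h : d m - e m = 0 := by rw [← heq]; exact hfall _ hj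
  linarith
end
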